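/- Let f : EuclideanSpace ℝ (Fin n) → ℝ be differentiable, bounded below by f_low, with ∇f Lipschitz continuous with constant L_g. Consider iterates of the IBO trust-region algorithm: sequences x_k ∈ EuclideanSpace ℝ (Fin n), Δ_k > 0 with Δ_0 > 0 given, quadratic models m_k about x_k with data (c_k, g_k, H_k), H_k symmetric with ‖H_k‖ ≤ κ_H − 1 for some κ_H ≥ 1, each m_k fully linear for f in B(x_k, Δ_k) with constants κ_mf, κ_mg > 0 independent of k, and steps s_k with ‖s_k‖ ≤ Δ_k and m_k(x_k) − m_k(x_k + s_k) ≥ κ_s·‖g_k‖·min(Δ_k, ‖g_k‖/(‖H_k‖ + 1)) for some κ_s ∈ (0, 1/2); with ρ_k := (f(x_k) − f(x_k + s_k))/(m_k(x_k) − m_k(x_k + s_k)), the updates are: if ρ_k ≥ η_S and ‖g_k‖ ≥ μ_c·Δ_k then x_{k+1} = x_k + s_k and Δ_{k+1} = γ_inc·Δ_k; otherwise if ρ_k ≥ η_U and ‖g_k‖ ≥ μ_c·Δ_k then x_{k+1} = x_k + s_k and Δ_{k+1} = Δ_k; otherwise x_{k+1} = x_k and Δ_{k+1} = γ_dec·Δ_k,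 where 0 < γ_dec < 1 < γ_inc, 0 < η_U ≤ η_S < 1, μ_c > 0. If ε > 0 and ‖∇f(x_k)‖ ≥ ε for all k = 0, …, K−1, then K ≤ log(Δ_0/Δ_min(ε))/log(1/γ_dec) + (1 + log(γ_inc)/log(1/γ_dec))·(1 + κ_mg/μ_c)·(f(x_0) − f_low)/(η_U·κ_s·ε·Δ_min(ε)), where Δ_min(ε) := min(Δ_0, γ_dec·ε/(max(2κ_mf/(κ_s·(1 − η_S)), κ_H, μ_c) + κ_mg), ε/((1 + κ_mg/μ_c)·κ_H)). -/

import Mathlib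

/-! If `Δ_k ≤ ε / (c + κmg)`, full linearity gives `‖g_k‖ ≥ c Δ_k`, so the model error
`O(Δ_k²)` is small against the predicted decrease `κs ‖g_k‖ Δ_k` and the iteration is very
successful; hence the radius never falls below `Δmin`. A successful iteration then decreases `f`
by at least `ηU κs ε Δmin / (1 + κmg / μc)`, which bounds their number by the gap
`f(x_0) - flow`. Each unsuccessful iteration lowers `log Δ` by `log (1 / γdec)`, each successful
one raises it by at most `log γinc`, and `log Δ` stays above `log Δmin`, which bounds the
number of unsuccessful iterations. -/

open scoped RealInnerProductSpace
open Metric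

noncomputable section

/-- Matrix–vector multiplication as a map on Euclidean space. -/
def mulVecE {n : ℕ} (H : Matrix (Fin n) (Fin n) ℝ) (v : EuclideanSpace ℝ (Fin n)) :
    EuclideanSpace ℝ (Fin n) :=
  (EuclideanSpace.equiv (Fin n) ℝ).symm (H.mulVec (EuclideanSpace.equiv (Fin n) ℝ v))

/-- Operator 2-norm of a matrix (the norm induced by the Euclidean vector norm). -/
def opNorm {n : ℕ} (H : Matrix (Fin n) (Fin n) ℝ) : ℝ :=
  sSup {r : ℝ | ∃ v : EuclideanSpace ℝ (Fin n), ‖v‖ ≤ 1 ∧ r = ‖mulVecE H v‖}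

/-- Quadratic model about `x` with data `(c, g, H)`. -/
def qm {n : ℕ} (x : EuclideanSpace ℝ (Fin n)) (c : ℝ) (g : EuclideanSpace ℝ (Fin n))
    (H : Matrix (Fin n) (Fin n) ℝ) (y : EuclideanSpace ℝ (Fin n)) : ℝ :=
  c + ⟪g, y - x⟫ + (1 / 2) * ⟪y - x, mulVecE H (y - x)⟫

/-- `m` is a fully linear model for `f` on the closed ball `B(x, Δ)`. -/
def IsFullyLinear {n : ℕ} (f m : EuclideanSpace ℝ (Fin n) → ℝ)
    (x : EuclideanSpace ℝ (Fin n)) (Δ κmf κmg : ℝ) : Prop :=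
  ∀ y ∈ closedBall x Δ,
    |m y - f y| ≤ κmf * Δ ^ 2 ∧ ‖gradient m y - gradient f y‖ ≤ κmg * Δ

/-- `m` is a fully quadratic model for `f` on the closed ball `B(x, Δ)`. -/
def IsFullyQuadratic {n : ℕ} (f m : EuclideanSpace ℝ (Fin n) → ℝ)
    (x : EuclideanSpace ℝ (Fin n)) (Δ κmf κmg κmh : ℝ) : Prop :=
  ∀ y ∈ closedBall x Δ,
    |m y - f y| ≤ κmf * Δ ^ 3 ∧ ‖gradient m y - gradient f y‖ ≤ κmg * Δ ^ 2 ∧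
      ‖fderiv ℝ (gradient m) y - fderiv ℝ (gradient f) y‖ ≤ κmh * Δ

/-- Smallest eigenvalue of a symmetric matrix: the minimum of `⟪u, H u⟫` over unit vectors. -/
def lambdaMin {n : ℕ} (H : Matrix (Fin n) (Fin n) ℝ) : ℝ :=
  sInf {r : ℝ | ∃ u : EuclideanSpace ℝ (Fin n), ‖u‖ = 1 ∧ r = ⟪u, mulVecE H u⟫}

/-- `τ(H) = max(-λ_min(H), 0)`. -/
def tau {n : ℕ} (H : Matrix (Fin n) (Fin n) ℝ) : ℝ := max (-lambdaMin H) 0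

/-- Hessian matrix of `f` at `x`. -/
def hessMat {n : ℕ} (f : EuclideanSpace ℝ (Fin n) → ℝ) (x : EuclideanSpace ℝ (Fin n)) :
    Matrix (Fin n) (Fin n) ℝ :=
  Matrix.of fun i j => fderiv ℝ (gradient f) x (EuclideanSpace.single j 1) i

/-- ℓ∞ operator norm of a matrix: the maximum absolute row sum. -/
def linftyNorm {m k : Type*} [Fintype m] [Fintype k] (A : Matrix m k ℝ) : ℝ :=
  sSup (Set.range fun i => ∑ j, |A i j|)

theorem opNorm_nonneg {n : ℕ} (H : Matrix (Fin n) (Fin n) ℝ) : 0 ≤ opNorm H := by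
  by_cases hb : BddAbove {r : ℝ | ∃ v : EuclideanSpace ℝ (Fin n), ‖v‖ ≤ 1 ∧ r = ‖mulVecE H v‖}
  · exact le_csSup hb ⟨0, by simp, by simp [mulVecE]⟩
  · exact (Real.sSup_of_not_bddAbove hb).ge

theorem hasGradientAt_qm_self {n : ℕ} (x : EuclideanSpace ℝ (Fin n)) (c : ℝ)
    (g : EuclideanSpace ℝ (Fin n)) (H : Matrix (Fin n) (Fin n) ℝ) :
    HasGradientAt (qm x c g H) g x := by
  rw [hasGradientAt_iff_hasFDerivAt]
  have hd : HasFDerivAt (fun y => y - x) (ContinuousLinearMap.id ℝ _) x :=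
    (hasFDerivAt_id x).sub_const x
  have hlin := (innerSL ℝ g).hasFDerivAt.comp x hd
  have hquad := hd.inner ℝ ((Matrix.toEuclideanCLM (𝕜 := ℝ) H).hasFDerivAt.comp x hd)
  refine HasFDerivAt.congr_fderiv
    (((hasFDerivAt_const c x).add hlin).add (hquad.const_mul (1 / 2))) ?_
  -- the quadratic term is stationary at `x`, where both of its factors vanish
  ext v
  simp

theorem IsFullyLinear.norm_gradient_le {n : ℕ} {f : EuclideanSpace ℝ (Fin n) → ℝ}
    {x g : EuclideanSpace ℝ (Fin n)} {c Δ κmf κmg : ℝ} {H : Matrix (Fin n) (Fin n) ℝ}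
    (hFL : IsFullyLinear f (qm x c g H) x Δ κmf κmg) (hΔ : 0 ≤ Δ) :
    ‖gradient f x‖ ≤ ‖g‖ + κmg * Δ := by
  have hgrad := (hFL x (mem_closedBall_self hΔ)).2
  rw [(hasGradientAt_qm_self x c g H).gradient] at hgrad
  calc ‖gradient f x‖ = ‖g - (g - gradient f x)‖ := by rw [sub_sub_cancel]
    _ ≤ ‖g‖ + ‖g - gradient f x‖ := norm_sub_le _ _
    _ ≤ ‖g‖ + κmg * Δ := by gcongr

theorem le_div_of_abs_sub_le {mx my fx fy e η : ℝ} (hx : |mx - fx| ≤ e) (hy : |my - fy| ≤ e)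
    (hpred : 0 < mx - my) (he : 2 * e ≤ (1 - η) * (mx - my)) :
    η ≤ (fx - fy) / (mx - my) := by
  rw [le_div_iff₀ hpred]
  linarith [abs_le.1 hx, abs_le.1 hy]

theorem IsFullyLinear.very_successful_of_radius_le {n : ℕ} {f : EuclideanSpace ℝ (Fin n) → ℝ}
    {x g s : EuclideanSpace ℝ (Fin n)} {H : Matrix (Fin n) (Fin n) ℝ}
    {c Δ κmf κmg κs κH ηS μc C ε : ℝ}
    (hFL : IsFullyLinear f (qm x c g H) x Δ κmf κmg) (hΔ : 0 < Δ) (hs : ‖s‖ ≤ Δ)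
    (hκs : 0 < κs) (hηS : ηS < 1)
    (hdec : κs * ‖g‖ * min Δ (‖g‖ / (opNorm H + 1)) ≤ qm x c g H x - qm x c g H (x + s))
    (hHκ : opNorm H + 1 ≤ κH) (hκH : κH ≤ C) (hμc : μc ≤ C)
    (hκmf : 2 * κmf ≤ κs * (1 - ηS) * C)
    (hε : ε ≤ ‖gradient f x‖) (hΔε : (C + κmg) * Δ ≤ ε) :
    ηS ≤ (f x - f (x + s)) / (qm x c g H x - qm x c g H (x + s)) ∧ μc * Δ ≤ ‖g‖ := by
  have hH := opNorm_nonneg H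
  have hg : C * Δ ≤ ‖g‖ := by linarith [hFL.norm_gradient_le hΔ.le]
  have hmin : min Δ (‖g‖ / (opNorm H + 1)) = Δ := by
    refine min_eq_left ((le_div_iff₀ (by linarith)).2 ?_)
    nlinarith
  rw [hmin] at hdec
  have hpred : κs * C * Δ ^ 2 ≤ qm x c g H x - qm x c g H (x + s) := by
    refine le_trans ?_ hdec
    have := mul_le_mul_of_nonneg_left hg hκs.le
    nlinarith
  have hxs : x + s ∈ closedBall x Δ := by
    rwa [mem_closedBall, dist_eq_norm, add_sub_cancel_left]
  have hC : 0 < C := by linarith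
  refine ⟨le_div_of_abs_sub_le (hFL x (mem_closedBall_self hΔ.le)).1 (hFL (x + s) hxs).1
    (lt_of_lt_of_le (by positivity) hpred) ?_,
    (mul_le_mul_of_nonneg_right hμc hΔ.le).trans hg⟩
  have := mul_le_mul_of_nonneg_left hpred (by linarith : (0 : ℝ) ≤ 1 - ηS)
  nlinarith

theorem IsFullyLinear.mul_le_sub_of_successful {n : ℕ} {f : EuclideanSpace ℝ (Fin n) → ℝ}
    {x g s : EuclideanSpace ℝ (Fin n)} {H : Matrix (Fin n) (Fin n) ℝ}
    {c Δ κmf κmg κs κH ηU μc ε Δmin : ℝ}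
    (hFL : IsFullyLinear f (qm x c g H) x Δ κmf κmg) (hΔ : 0 ≤ Δ) (hκs : 0 < κs)
    (hκmg : 0 ≤ κmg) (hηU : 0 ≤ ηU) (hμc : 0 < μc) (hε0 : 0 < ε)
    (hdec : κs * ‖g‖ * min Δ (‖g‖ / (opNorm H + 1)) ≤ qm x c g H x - qm x c g H (x + s))
    (hHκ : opNorm H + 1 ≤ κH)
    (hρ : ηU ≤ (f x - f (x + s)) / (qm x c g H x - qm x c g H (x + s)))
    (hμΔ : μc * Δ ≤ ‖g‖) (hε : ε ≤ ‖gradient f x‖)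
    (hΔmin : 0 < Δmin) (hΔminΔ : Δmin ≤ Δ) (hΔminε : Δmin ≤ ε / ((1 + κmg / μc) * κH)) :
    ηU * κs * ε * Δmin / (1 + κmg / μc) ≤ f x - f (x + s) := by
  have hH := opNorm_nonneg H
  have hA : 0 < 1 + κmg / μc := by positivity
  have hgε : ε / (1 + κmg / μc) ≤ ‖g‖ := by
    have hΔg : κmg * Δ ≤ κmg / μc * ‖g‖ := by
      rw [div_mul_eq_mul_div, le_div_iff₀ hμc]; nlinarith
    rw [div_le_iff₀ hA]; linarith [hFL.norm_gradient_le hΔ]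
  have hmin : Δmin ≤ min Δ (‖g‖ / (opNorm H + 1)) := by
    refine le_min hΔminΔ ?_
    calc Δmin ≤ ε / (1 + κmg / μc) / κH := by rwa [div_div]
      _ ≤ ‖g‖ / κH := by gcongr; linarith
      _ ≤ ‖g‖ / (opNorm H + 1) := by gcongr
  have hpred : κs * (ε / (1 + κmg / μc)) * Δmin ≤ qm x c g H x - qm x c g H (x + s) :=
    le_trans (by gcongr) hdec
  rw [le_div_iff₀ (lt_of_lt_of_le (by positivity) hpred)] at hρ
  calc ηU * κs * ε * Δmin / (1 + κmg / μc) = ηU * (κs * (ε / (1 + κmg / μc)) * Δmin) := by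
        ring
    _ ≤ ηU * (qm x c g H x - qm x c g H (x + s)) := by gcongr
    _ ≤ f x - f (x + s) := by linarith

theorem le_radius_of_small_radius_successful {Δ : ℕ → ℝ} {P : ℕ → Prop} {K : ℕ}
    {Δmin γ r : ℝ} (hγ : 0 ≤ γ) (h0 : Δmin ≤ Δ 0) (hr : Δmin ≤ γ * r)
    (hsmall : ∀ k < K, Δ k ≤ r → P k) (hsucc : ∀ k < K, P k → Δ k ≤ Δ (k + 1))
    (hunsucc : ∀ k < K, ¬P k → Δ (k + 1) = γ * Δ k) :
    ∀ k ≤ K, Δmin ≤ Δ k := by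
  intro k hk
  induction k with
  | zero => exact h0
  | succ k ih =>
    have hkK : k < K := hk
    by_cases hP : P k
    · exact (ih hkK.le).trans (hsucc k hkK hP)
    · have hlarge : r < Δ k := lt_of_not_ge fun h => hP (hsmall k hkK h)
      rw [hunsucc k hkK hP]
      exact hr.trans (by gcongr)

open Finset

theorem sub_le_of_forall_succ_sub_le_ite {a : ℕ → ℝ} {P : ℕ → Prop} [DecidablePred P]
    {K : ℕ} {u v : ℝ} (h : ∀ k < K, a (k + 1) - a k ≤ if P k then u else v) :
    a K - a 0 ≤ #{k ∈ range K | P k} * u + #{k ∈ range K | ¬P k} * v := by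
  rw [← sum_range_sub]
  calc ∑ k ∈ range K, (a (k + 1) - a k)
      ≤ ∑ k ∈ range K, if P k then u else v :=
        sum_le_sum fun k hk => h k (mem_range.1 hk)
    _ = _ := by simp only [sum_ite, sum_const, nsmul_eq_mul]

theorem iteration_count_le_of_radius_ge {φ Δ : ℕ → ℝ} {P : ℕ → Prop} {K : ℕ}
    {flow d Δmin γdec γinc : ℝ} (hΔ : ∀ k, 0 < Δ k) (hγdec0 : 0 < γdec) (hγdec1 : γdec < 1)
    (hγinc : 1 ≤ γinc) (hd : 0 < d) (hΔmin : 0 < Δmin) (hΔK : Δmin ≤ Δ K)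
    (hflow : flow ≤ φ K)
    (hsucc : ∀ k < K, P k → φ (k + 1) ≤ φ k - d ∧ Δ (k + 1) ≤ γinc * Δ k)
    (hunsucc : ∀ k < K, ¬P k → φ (k + 1) ≤ φ k ∧ Δ (k + 1) ≤ γdec * Δ k) :
    (K : ℝ) ≤ Real.log (Δ 0 / Δmin) / Real.log (1 / γdec) +
      (1 + Real.log γinc / Real.log (1 / γdec)) * ((φ 0 - flow) / d) := by
  classical
  set NS : ℕ := #{k ∈ range K | P k}
  set NU : ℕ := #{k ∈ range K | ¬P k}
  have hK : (K : ℝ) = NS + NU := by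
    rw [← Nat.cast_add, card_filter_add_card_filter_not, card_range]
  have hφ : (NS : ℝ) * d ≤ φ 0 - flow := by
    have := sub_le_of_forall_succ_sub_le_ite (a := φ) (P := P) (u := -d) (v := 0)
      fun k hk => by
        split_ifs with hP
        · linarith [(hsucc k hk hP).1]
        · linarith [(hunsucc k hk hP).1]
    linarith
  have hlogΔ := sub_le_of_forall_succ_sub_le_ite (a := fun k => Real.log (Δ k)) (P := P)
    (u := Real.log γinc) (v := Real.log γdec) fun k hk => by
      have hlog_mul {γ : ℝ} (hγ : 0 < γ) (hle : Δ (k + 1) ≤ γ * Δ k) :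
          Real.log (Δ (k + 1)) - Real.log (Δ k) ≤ Real.log γ := by
        rw [← Real.log_div (hΔ _).ne' (hΔ k).ne']
        exact Real.log_le_log (div_pos (hΔ _) (hΔ k)) ((div_le_iff₀ (hΔ k)).2 hle)
      split_ifs with hP
      · exact hlog_mul (by linarith) (hsucc k hk hP).2
      · exact hlog_mul hγdec0 (hunsucc k hk hP).2
  have hL : 0 < Real.log (1 / γdec) := Real.log_pos (one_lt_one_div hγdec0 hγdec1)
  have hNU : (NU : ℝ) * Real.log (1 / γdec) ≤ Real.log (Δ 0 / Δmin) + NS * Real.log γinc := by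
    have := Real.log_le_log hΔmin hΔK
    rw [one_div, Real.log_inv, Real.log_div (hΔ 0).ne' hΔmin.ne']
    linarith
  have hNS' : (NS : ℝ) ≤ (φ 0 - flow) / d := (le_div_iff₀ hd).2 hφ
  have hNU' := (le_div_iff₀ hL).2 hNU
  have hγinc' : 0 ≤ Real.log γinc / Real.log (1 / γdec) :=
    div_nonneg (Real.log_nonneg hγinc) hL.le
  calc (K : ℝ) ≤ NS + (Real.log (Δ 0 / Δmin) + NS * Real.log γinc) / Real.log (1 / γdec) := by
        linarith
    _ = Real.log (Δ 0 / Δmin) / Real.log (1 / γdec) +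
        (1 + Real.log γinc / Real.log (1 / γdec)) * NS := by ring
    _ ≤ _ := by gcongr

theorem ibo_first_order_complexity_general {n : ℕ}
    (f : EuclideanSpace ℝ (Fin n) → ℝ)
    (flow : ℝ) (hflow : ∀ y, flow ≤ f y)
    (x : ℕ → EuclideanSpace ℝ (Fin n)) (Δ : ℕ → ℝ) (hΔpos : ∀ k, 0 < Δ k)
    (cm : ℕ → ℝ) (g : ℕ → EuclideanSpace ℝ (Fin n))
    (H : ℕ → Matrix (Fin n) (Fin n) ℝ)
    (κH : ℝ) (hκH : 1 ≤ κH) (hHnorm : ∀ k, opNorm (H k) ≤ κH - 1)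
    (m : ℕ → EuclideanSpace ℝ (Fin n) → ℝ)
    (hm : ∀ k y, m k y = qm (x k) (cm k) (g k) (H k) y)
    (κmf κmg : ℝ) (hκmg : 0 < κmg)
    (hFL : ∀ k, IsFullyLinear f (m k) (x k) (Δ k) κmf κmg)
    (s : ℕ → EuclideanSpace ℝ (Fin n)) (hs : ∀ k, ‖s k‖ ≤ Δ k)
    (κs : ℝ) (hκs : κs ∈ Set.Ioo (0 : ℝ) (1 / 2))
    (hdec : ∀ k, κs * ‖g k‖ * min (Δ k) (‖g k‖ / (opNorm (H k) + 1)) ≤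
      m k (x k) - m k (x k + s k))
    (γdec γinc ηU ηS μc : ℝ)
    (hγdec0 : 0 < γdec) (hγdec1 : γdec < 1) (hγinc : 1 < γinc)
    (hηU : 0 < ηU) (hηUS : ηU ≤ ηS) (hηS : ηS < 1) (hμc : 0 < μc)
    (ρ : ℕ → ℝ)
    (hρ : ∀ k, ρ k = (f (x k) - f (x k + s k)) / (m k (x k) - m k (x k + s k)))
    (hVS : ∀ k, (ηS ≤ ρ k ∧ μc * Δ k ≤ ‖g k‖) →
      x (k + 1) = x k + s k ∧ Δ (k + 1) = γinc * Δ k)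
    (hS : ∀ k, ¬(ηS ≤ ρ k ∧ μc * Δ k ≤ ‖g k‖) → (ηU ≤ ρ k ∧ μc * Δ k ≤ ‖g k‖) →
      x (k + 1) = x k + s k ∧ Δ (k + 1) = Δ k)
    (hU : ∀ k, ¬(ηU ≤ ρ k ∧ μc * Δ k ≤ ‖g k‖) →
      x (k + 1) = x k ∧ Δ (k + 1) = γdec * Δ k)
    (ε : ℝ) (hε : 0 < ε) (K : ℕ)
    (hgrad : ∀ k < K, ε ≤ ‖gradient f (x k)‖)
    (Δmin : ℝ)
    (hΔmin : Δmin = min (Δ 0)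
      (min (γdec * ε / (max (max (2 * κmf / (κs * (1 - ηS))) κH) μc + κmg))
        (ε / ((1 + κmg / μc) * κH)))) :
    (K : ℝ) ≤ Real.log (Δ 0 / Δmin) / Real.log (1 / γdec) +
      (1 + Real.log γinc / Real.log (1 / γdec)) *
        ((1 + κmg / μc) * (f (x 0) - flow) / (ηU * κs * ε * Δmin)) := by
  obtain rfl : m = fun k => qm (x k) (cm k) (g k) (H k) := funext fun k => funext (hm k)
  obtain ⟨hκs0, -⟩ := hκs
  set C := max (max (2 * κmf / (κs * (1 - ηS))) κH) μc
  have hκHC : κH ≤ C := le_max_of_le_left (le_max_right _ _)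
  have hκmfC : 2 * κmf ≤ κs * (1 - ηS) * C := by
    rw [← div_le_iff₀' (mul_pos hκs0 (by linarith))]
    exact le_max_of_le_left (le_max_left _ _)
  have hCκmg : 0 < C + κmg := by linarith
  have hHκ (k : ℕ) : opNorm (H k) + 1 ≤ κH := by linarith [hHnorm k]
  have hΔmin0 : 0 < Δmin := by
    rw [hΔmin]
    exact lt_min (hΔpos 0) (lt_min (by positivity) (by positivity))
  have hΔminΔ0 : Δmin ≤ Δ 0 := hΔmin ▸ min_le_left _ _
  have hΔminγ : Δmin ≤ γdec * (ε / (C + κmg)) := by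
    rw [mul_div_assoc', hΔmin]
    exact min_le_of_right_le (min_le_left _ _)
  have hΔminε : Δmin ≤ ε / ((1 + κmg / μc) * κH) := hΔmin ▸ min_le_of_right_le (min_le_right _ _)
  have hsucc (k : ℕ) (hk : ηU ≤ ρ k ∧ μc * Δ k ≤ ‖g k‖) :
      x (k + 1) = x k + s k ∧ Δ k ≤ Δ (k + 1) ∧ Δ (k + 1) ≤ γinc * Δ k := by
    have hΔinc := le_mul_of_one_le_left (hΔpos k).le hγinc.le
    by_cases hk' : ηS ≤ ρ k ∧ μc * Δ k ≤ ‖g k‖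
    · obtain ⟨hx, hΔ⟩ := hVS k hk'
      exact ⟨hx, hΔ ▸ hΔinc, hΔ.le⟩
    · obtain ⟨hx, hΔ⟩ := hS k hk' hk
      exact ⟨hx, hΔ.ge, hΔ ▸ hΔinc⟩
  have hΔlb := le_radius_of_small_radius_successful (r := ε / (C + κmg))
    (P := fun k => ηU ≤ ρ k ∧ μc * Δ k ≤ ‖g k‖) hγdec0.le hΔminΔ0 hΔminγ
    (fun k hk hΔk => hρ k ▸ ((hFL k).very_successful_of_radius_le (hΔpos k) (hs k) hκs0 hηS
      (hdec k) (hHκ k) hκHC (le_max_right _ _) hκmfC (hgrad k hk)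
      (by rwa [le_div_iff₀' hCκmg] at hΔk)).imp_left hηUS.trans)
    (fun k _ hk => (hsucc k hk).2.1) (fun k _ hk => (hU k hk).2)
  refine (iteration_count_le_of_radius_ge (φ := fun k => f (x k))
    (d := ηU * κs * ε * Δmin / (1 + κmg / μc)) hΔpos hγdec0 hγdec1 hγinc.le (by positivity)
    hΔmin0 (hΔlb K le_rfl) (hflow _) (fun k hk hPk => ⟨?_, (hsucc k hPk).2.2⟩)
    (fun k _ hPk => ⟨(hU k hPk).1 ▸ le_rfl, (hU k hPk).2.le⟩)).trans_eq ?_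
  · rw [(hsucc k hPk).1]
    linarith [(hFL k).mul_le_sub_of_successful (hΔpos k).le hκs0 hκmg.le hηU.le hμc hε
      (hdec k) (hHκ k) (hρ k ▸ hPk.1) hPk.2 (hgrad k hk) hΔmin0 (hΔlb k hk.le) hΔminε]
  · rw [div_div_eq_mul_div, mul_comm (f (x 0) - flow)]

/-- First-order worst-case complexity bound for the IBO trust-region method
(Theorem `thm_wcc_dfo`). -/
theorem ibo_first_order_complexity {n : ℕ}
    (f : EuclideanSpace ℝ (Fin n) → ℝ) (hf : Differentiable ℝ f)
    (flow : ℝ) (hflow : ∀ y, flow ≤ f y)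
    (Lg : NNReal) (hLip : LipschitzWith Lg (gradient f))
    (x : ℕ → EuclideanSpace ℝ (Fin n)) (Δ : ℕ → ℝ) (hΔpos : ∀ k, 0 < Δ k)
    (cm : ℕ → ℝ) (g : ℕ → EuclideanSpace ℝ (Fin n))
    (H : ℕ → Matrix (Fin n) (Fin n) ℝ) (hHsymm : ∀ k, (H k).IsSymm)
    (κH : ℝ) (hκH : 1 ≤ κH) (hHnorm : ∀ k, opNorm (H k) ≤ κH - 1)
    (m : ℕ → EuclideanSpace ℝ (Fin n) → ℝ)
    (hm : ∀ k y, m k y = qm (x k) (cm k) (g k) (H k) y)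
    (κmf κmg : ℝ) (hκmf : 0 < κmf) (hκmg : 0 < κmg)
    (hFL : ∀ k, IsFullyLinear f (m k) (x k) (Δ k) κmf κmg)
    (s : ℕ → EuclideanSpace ℝ (Fin n)) (hs : ∀ k, ‖s k‖ ≤ Δ k)
    (κs : ℝ) (hκs : κs ∈ Set.Ioo (0 : ℝ) (1 / 2))
    (hdec : ∀ k, κs * ‖g k‖ * min (Δ k) (‖g k‖ / (opNorm (H k) + 1)) ≤
      m k (x k) - m k (x k + s k))
    (γdec γinc ηU ηS μc : ℝ)
    (hγdec0 : 0 < γdec) (hγdec1 : γdec < 1) (hγinc : 1 < γinc)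
    (hηU : 0 < ηU) (hηUS : ηU ≤ ηS) (hηS : ηS < 1) (hμc : 0 < μc)
    (ρ : ℕ → ℝ)
    (hρ : ∀ k, ρ k = (f (x k) - f (x k + s k)) / (m k (x k) - m k (x k + s k)))
    (hVS : ∀ k, (ηS ≤ ρ k ∧ μc * Δ k ≤ ‖g k‖) →
      x (k + 1) = x k + s k ∧ Δ (k + 1) = γinc * Δ k)
    (hS : ∀ k, ¬(ηS ≤ ρ k ∧ μc * Δ k ≤ ‖g k‖) → (ηU ≤ ρ k ∧ μc * Δ k ≤ ‖g k‖) →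
      x (k + 1) = x k + s k ∧ Δ (k + 1) = Δ k)
    (hU : ∀ k, ¬(ηU ≤ ρ k ∧ μc * Δ k ≤ ‖g k‖) →
      x (k + 1) = x k ∧ Δ (k + 1) = γdec * Δ k)
    (ε : ℝ) (hε : 0 < ε) (K : ℕ)
    (hgrad : ∀ k < K, ε ≤ ‖gradient f (x k)‖)
    (Δmin : ℝ)
    (hΔmin : Δmin = min (Δ 0)
      (min (γdec * ε / (max (max (2 * κmf / (κs * (1 - ηS))) κH) μc + κmg))
        (ε / ((1 + κmg / μc) * κH)))) :
    (K : ℝ) ≤ Real.log (Δ 0 / Δmin) / Real.log (1 / γdec) +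
      (1 + Real.log γinc / Real.log (1 / γdec)) *
        ((1 + κmg / μc) * (f (x 0) - flow) / (ηU * κs * ε * Δmin)) :=
  ibo_first_order_complexity_general f flow hflow x Δ hΔpos cm g H κH hκH hHnorm m hm κmf κmg hκmg
    hFL s hs κs hκs hdec γdec γinc ηU ηS μc hγdec0 hγdec1 hγinc hηU hηUS hηS hμc ρ hρ hVS hS hU ε hε
    K hgrad Δmin hΔmin
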